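/- arXiv:2312.08684 — 2 statements merged into one kernel-verified Lean document; each statement's English description precedes it below -/
import Mathlib

section
/- Let f : ℝ^n → ℝ be differentiable with L-Lipschitz gradient for some L ≥ 0. Then for every s ∈ ℝ^n and every ε > 0, the Gaussian smoothing error satisfies the quantitative bound | ∫ f(x) φ_ε(x; s) dx − f(s) | ≤ (n L / 2) · ε. -/
/-!
Since the gradient is `L`-Lipschitz, `f x = f s + ⟪∇f s, x - s⟫ + R x` with
`|R x| ≤ L / 2 * ‖x - s‖ ^ 2`. Against the Gaussian density the constant term integrates to `f s`,
the linear term integrates to zero because the density is symmetric about `s`, and the remainder is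
bounded by `L / 2` times the second moment `∫ ‖x - s‖² φ_ε(x; s) dx = n ε`. In polar coordinates
that moment is a ratio of two radial integrals, which the identity `Γ(n/2 + 1) = (n/2) Γ(n/2)`
evaluates.
-/

open MeasureTheory

/-- The isotropic Gaussian probability density on `ℝⁿ` with mean `s` and
covariance `ε I`:  `φ_ε(x; s) = (2πε)^(−n/2) exp(−‖x − s‖²/(2ε))`. -/
noncomputable def gaussPdf (n : ℕ) (ε : ℝ) (s x : EuclideanSpace ℝ (Fin n)) : ℝ :=
  (2 * Real.pi * ε) ^ (-(n : ℝ) / 2) * Real.exp (-‖x - s‖ ^ 2 / (2 * ε))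

open Real Set

section Taylor

variable {E F : Type*} [NormedAddCommGroup E] [NormedSpace ℝ E] [NormedAddCommGroup F]
  [NormedSpace ℝ F] {f : E → F} {L : ℝ}

theorem norm_sub_sub_fderiv_apply_le_of_lipschitz_fderiv (hf : Differentiable ℝ f)
    (hlip : ∀ x y, ‖fderiv ℝ f x - fderiv ℝ f y‖ ≤ L * ‖x - y‖) (x y : E) :
    ‖f y - f x - fderiv ℝ f x (y - x)‖ ≤ L / 2 * ‖y - x‖ ^ 2 := by
  set v := y - x
  let g : ℝ → F := fun t ↦ f (x + t • v) - f x - t • fderiv ℝ f x v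
  have hg : ∀ t, HasDerivAt g (fderiv ℝ f (x + t • v) v - fderiv ℝ f x v) t := by
    intro t
    have hline : HasDerivAt (fun t : ℝ ↦ x + t • v) v t := by
      simpa using ((hasDerivAt_id t).smul_const v).const_add x
    exact (((hf _).hasFDerivAt.comp_hasDerivAt t hline).sub_const (f x)).sub
      (by simpa using (hasDerivAt_id t).smul_const (fderiv ℝ f x v))
  have hB : ∀ t, HasDerivAt (fun t ↦ L / 2 * ‖v‖ ^ 2 * t ^ 2) (L * ‖v‖ ^ 2 * t) t := by
    intro t
    exact ((hasDerivAt_pow 2 t).const_mul (L / 2 * ‖v‖ ^ 2)).congr_deriv (by push_cast; ring)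
  have key := image_norm_le_of_norm_deriv_right_le_deriv_boundary (a := 0) (b := 1)
    (fun t _ ↦ (hg t).continuousAt.continuousWithinAt) (fun t _ ↦ (hg t).hasDerivWithinAt)
    (by simp [g]) hB (fun t ht ↦ ?_) (right_mem_Icc.2 zero_le_one)
  · simpa [g, v] using key
  calc ‖fderiv ℝ f (x + t • v) v - fderiv ℝ f x v‖
      = ‖(fderiv ℝ f (x + t • v) - fderiv ℝ f x) v‖ := rfl
    _ ≤ ‖fderiv ℝ f (x + t • v) - fderiv ℝ f x‖ * ‖v‖ := ContinuousLinearMap.le_opNorm _ _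
    _ ≤ L * ‖t • v‖ * ‖v‖ := by
        gcongr
        simpa using hlip (x + t • v) x
    _ = L * ‖v‖ ^ 2 * t := by
        rw [norm_smul, Real.norm_of_nonneg ht.1]; ring

end Taylor

section Gradient

variable {E : Type*} [NormedAddCommGroup E] [InnerProductSpace ℝ E] [CompleteSpace E]
  {f : E → ℝ} {L : ℝ}

theorem abs_sub_sub_inner_gradient_le_of_lipschitz_gradient (hf : Differentiable ℝ f)
    (hlip : ∀ x y, ‖gradient f x - gradient f y‖ ≤ L * ‖x - y‖) (x y : E) :
    |f y - f x - inner ℝ (gradient f x) (y - x)| ≤ L / 2 * ‖y - x‖ ^ 2 := by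
  have hlip' : ∀ x y, ‖fderiv ℝ f x - fderiv ℝ f y‖ ≤ L * ‖x - y‖ := by
    intro x y
    simpa [gradient, ← map_sub] using hlip x y
  simpa [gradient] using norm_sub_sub_fderiv_apply_le_of_lipschitz_fderiv hf hlip' x y

end Gradient

theorem Function.Odd.integral_eq_zero {G F : Type*} [MeasurableSpace G] [AddGroup G]
    [MeasurableNeg G] [NormedAddCommGroup F] [NormedSpace ℝ F] {g : G → F}
    (hg : Function.Odd g) (μ : Measure G) [μ.IsNegInvariant] : ∫ x, g x ∂μ = 0 := by
  have h := integral_neg_eq_self g μ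
  simp only [hg _, integral_neg] at h
  have h2 : (2 : ℝ) • ∫ x, g x ∂μ = 0 := by
    rw [two_smul]
    nth_rewrite 1 [← h]
    exact neg_add_cancel _
  exact (smul_eq_zero.1 h2).resolve_left two_ne_zero

theorem integral_Ioi_pow_add_two_mul_exp_neg_mul_sq {b : ℝ} (hb : 0 < b) (m : ℕ) :
    ∫ y in Ioi (0 : ℝ), y ^ (m + 2) * exp (-b * y ^ 2)
      = (m + 1) / (2 * b) * ∫ y in Ioi (0 : ℝ), y ^ m * exp (-b * y ^ 2) := by
  have hGamma (k : ℕ) : ∫ y in Ioi (0 : ℝ), y ^ k * exp (-b * y ^ 2)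
      = b ^ (-(k + 1 : ℝ) / 2) * (1 / 2) * Gamma ((k + 1) / 2) := by
    rw [← integral_rpow_mul_exp_neg_mul_rpow two_pos
      ((Nat.cast_nonneg _).trans_lt' neg_one_lt_zero) hb]
    refine setIntegral_congr_fun measurableSet_Ioi fun y _ ↦ ?_
    simp only [rpow_natCast, rpow_two]
  have hm : ((m + 2 : ℕ) + 1 : ℝ) / 2 = (m + 1) / 2 + 1 := by push_cast; ring
  rw [hGamma, hGamma, hm, Gamma_add_one (by positivity),
    show -(((m + 2 : ℕ) : ℝ) + 1) / 2 = -((m : ℝ) + 1) / 2 + -1 by push_cast; ring,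
    rpow_add hb, rpow_neg_one]
  field_simp

section Haar

variable {E : Type*} [NormedAddCommGroup E] [NormedSpace ℝ E] [FiniteDimensional ℝ E]
  [MeasurableSpace E] [BorelSpace E] (μ : Measure E) [μ.IsAddHaarMeasure] {b : ℝ}

theorem integrable_norm_pow_mul_exp_neg_mul_sq_norm (hb : 0 < b) (k : ℕ) :
    Integrable (fun x ↦ ‖x‖ ^ k * exp (-b * ‖x‖ ^ 2)) μ := by
  rcases subsingleton_or_nontrivial E with hE | hE
  · exact (integrable_const (‖(0 : E)‖ ^ k * exp (-b * ‖(0 : E)‖ ^ 2))).congr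
      (ae_of_all _ fun x ↦ by rw [Subsingleton.elim x 0])
  refine (integrable_fun_norm_addHaar μ (f := fun y ↦ y ^ k * exp (-b * y ^ 2))).2 ?_
  refine (integrableOn_rpow_mul_exp_neg_mul_sq hb (s := (Module.finrank ℝ E - 1 + k : ℕ))
    ((Nat.cast_nonneg _).trans_lt' neg_one_lt_zero)).congr_fun (fun y _ ↦ ?_) measurableSet_Ioi
  simp only [rpow_natCast, smul_eq_mul, pow_add, mul_assoc]

theorem integral_norm_sq_mul_exp_neg_mul_sq_norm (hb : 0 < b) :
    ∫ x, ‖x‖ ^ 2 * exp (-b * ‖x‖ ^ 2) ∂μ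
      = Module.finrank ℝ E / (2 * b) * ∫ x, exp (-b * ‖x‖ ^ 2) ∂μ := by
  rcases subsingleton_or_nontrivial E with hE | hE
  · simp [Subsingleton.elim _ (0 : E), Module.finrank_zero_of_subsingleton]
  have hd : ((Module.finrank ℝ E - 1 : ℕ) : ℝ) + 1 = Module.finrank ℝ E := by
    exact_mod_cast Nat.sub_add_cancel Module.finrank_pos
  have h2 := integral_fun_norm_addHaar μ (fun y ↦ y ^ 2 * exp (-b * y ^ 2))
  have h0 := integral_fun_norm_addHaar μ (fun y ↦ exp (-b * y ^ 2))
  simp only [smul_eq_mul, nsmul_eq_mul, ← mul_assoc, ← pow_add] at h2 h0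
  rw [h2, h0, integral_Ioi_pow_add_two_mul_exp_neg_mul_sq hb, hd]
  ring

end Haar

namespace gaussPdf

variable {n : ℕ} {ε : ℝ} (s : EuclideanSpace ℝ (Fin n))

theorem nonneg (hε : 0 ≤ ε) (x : EuclideanSpace ℝ (Fin n)) : 0 ≤ gaussPdf n ε s x := by
  unfold gaussPdf
  positivity

theorem continuous : Continuous (gaussPdf n ε s) := by
  unfold gaussPdf
  fun_prop

theorem eq_mul_exp (x : EuclideanSpace ℝ (Fin n)) :
    gaussPdf n ε s x = (2 * π * ε) ^ (-(n : ℝ) / 2) * exp (-(2 * ε)⁻¹ * ‖x - s‖ ^ 2) := by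
  rw [gaussPdf]
  congr 2
  ring

theorem integral_comp_sub_mul (h : EuclideanSpace ℝ (Fin n) → ℝ) :
    ∫ x, h (x - s) * gaussPdf n ε s x = ∫ y, h y * gaussPdf n ε 0 y := by
  simpa [gaussPdf] using integral_sub_right_eq_self (fun y ↦ h y * gaussPdf n ε 0 y) s

theorem integrable_norm_sub_pow_mul (hε : 0 < ε) (k : ℕ) :
    Integrable (fun x ↦ ‖x - s‖ ^ k * gaussPdf n ε s x) := by
  refine (((integrable_norm_pow_mul_exp_neg_mul_sq_norm volume (b := (2 * ε)⁻¹) (by positivity)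
    k).const_mul ((2 * π * ε) ^ (-(n : ℝ) / 2))).comp_sub_right s).congr (ae_of_all _ fun x ↦ ?_)
  simp only [eq_mul_exp]
  ring

theorem integrable (hε : 0 < ε) : Integrable (gaussPdf n ε s) := by
  simpa using integrable_norm_sub_pow_mul s hε 0

theorem integral_eq_one (hε : 0 < ε) : ∫ x, gaussPdf n ε s x = 1 := by
  have hπε : 0 < 2 * π * ε := by positivity
  have h := integral_comp_sub_mul s (fun _ ↦ 1) (ε := ε)
  simp only [one_mul] at h
  rw [h]
  simp only [eq_mul_exp, sub_zero]
  rw [integral_const_mul, GaussianFourier.integral_rexp_neg_mul_sq_norm (by positivity),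
    finrank_euclideanSpace_fin, div_inv_eq_mul, show π * (2 * ε) = 2 * π * ε by ring,
    ← rpow_add hπε, neg_div, neg_add_cancel, rpow_zero]

theorem integral_inner_sub_mul (w : EuclideanSpace ℝ (Fin n)) :
    ∫ x, inner ℝ w (x - s) * gaussPdf n ε s x = 0 := by
  rw [integral_comp_sub_mul s (fun y ↦ inner ℝ w y)]
  exact Function.Odd.integral_eq_zero (fun y ↦ by simp [gaussPdf]) volume

theorem integral_norm_sub_sq_mul (hε : 0 < ε) :
    ∫ x, ‖x - s‖ ^ 2 * gaussPdf n ε s x = n * ε := by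
  have h := integral_norm_sq_mul_exp_neg_mul_sq_norm (volume : Measure (EuclideanSpace ℝ (Fin n)))
    (b := (2 * ε)⁻¹) (by positivity)
  rw [finrank_euclideanSpace_fin] at h
  rw [integral_comp_sub_mul s (fun y ↦ ‖y‖ ^ 2)]
  calc ∫ y, ‖y‖ ^ 2 * gaussPdf n ε 0 y
      = n / (2 * (2 * ε)⁻¹) * ∫ y, gaussPdf n ε 0 y := by
        simp only [eq_mul_exp, sub_zero, mul_left_comm (‖_‖ ^ 2), integral_const_mul, h]
        ring
    _ = n * ε := by
        rw [integral_eq_one 0 hε]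
        field_simp

theorem norm_mul_le_of_abs_le_pow (hε : 0 ≤ ε) {R : EuclideanSpace ℝ (Fin n) → ℝ} {C : ℝ}
    {k : ℕ} {x : EuclideanSpace ℝ (Fin n)} (hR : |R x| ≤ C * ‖x - s‖ ^ k) :
    ‖R x * gaussPdf n ε s x‖ ≤ C * (‖x - s‖ ^ k * gaussPdf n ε s x) := by
  rw [norm_mul, Real.norm_eq_abs, Real.norm_of_nonneg (nonneg s hε x), ← mul_assoc]
  exact mul_le_mul_of_nonneg_right hR (nonneg s hε x)

theorem integrable_mul_of_abs_le_pow (hε : 0 < ε) {R : EuclideanSpace ℝ (Fin n) → ℝ} {C : ℝ}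
    {k : ℕ} (hRc : Continuous R) (hR : ∀ x, |R x| ≤ C * ‖x - s‖ ^ k) :
    Integrable (fun x ↦ R x * gaussPdf n ε s x) :=
  ((integrable_norm_sub_pow_mul s hε k).const_mul C).mono'
    (hRc.mul (continuous s)).aestronglyMeasurable
    (ae_of_all _ fun x ↦ norm_mul_le_of_abs_le_pow s hε.le (hR x))

theorem abs_integral_mul_le_of_abs_le_sq (hε : 0 < ε) {R : EuclideanSpace ℝ (Fin n) → ℝ} {C : ℝ}
    (hR : ∀ x, |R x| ≤ C * ‖x - s‖ ^ 2) :
    |∫ x, R x * gaussPdf n ε s x| ≤ C * (n * ε) := by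
  rw [← integral_norm_sub_sq_mul s hε, ← integral_const_mul, ← Real.norm_eq_abs]
  exact norm_integral_le_of_norm_le ((integrable_norm_sub_pow_mul s hε 2).const_mul C)
    (ae_of_all _ fun x ↦ norm_mul_le_of_abs_le_pow s hε.le (hR x))

theorem integral_mul_sub_eq (hε : 0 < ε) (f : EuclideanSpace ℝ (Fin n) → ℝ)
    (w : EuclideanSpace ℝ (Fin n))
    (hint : Integrable (fun x ↦ (f x - f s - inner ℝ w (x - s)) * gaussPdf n ε s x)) :
    (∫ x, f x * gaussPdf n ε s x) - f s
      = ∫ x, (f x - f s - inner ℝ w (x - s)) * gaussPdf n ε s x := by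
  have hlin : Integrable (fun x ↦ inner ℝ w (x - s) * gaussPdf n ε s x) :=
    integrable_mul_of_abs_le_pow s hε (C := ‖w‖) (k := 1) (by fun_prop) fun x ↦ by
      simpa using abs_real_inner_le_norm w (x - s)
  have hconst := (integrable s hε).const_mul (f s)
  have hsplit : ∫ x, f x * gaussPdf n ε s x
      = (∫ x, (f x - f s - inner ℝ w (x - s)) * gaussPdf n ε s x)
        + f s * (∫ x, gaussPdf n ε s x) + ∫ x, inner ℝ w (x - s) * gaussPdf n ε s x := by
    rw [← integral_const_mul, ← integral_add hint hconst, ← integral_add _ hlin]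
    · congr 1 with x
      ring
    · exact hint.add hconst
  rw [hsplit, integral_eq_one s hε, integral_inner_sub_mul]
  ring

end gaussPdf

theorem gaussian_smoothing_error_bound_general (n : ℕ) (L : ℝ)
    (f : EuclideanSpace ℝ (Fin n) → ℝ)
    (hf : Differentiable ℝ f)
    (hlip : ∀ x y, ‖gradient f x - gradient f y‖ ≤ L * ‖x - y‖)
    (s : EuclideanSpace ℝ (Fin n)) (ε : ℝ) (hε : 0 < ε) :
    |(∫ x, f x * gaussPdf n ε s x) - f s| ≤ ((n : ℝ) * L / 2) * ε := by
  have hR := abs_sub_sub_inner_gradient_le_of_lipschitz_gradient hf hlip s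
  have hRc : Continuous fun x ↦ f x - f s - inner ℝ (gradient f s) (x - s) :=
    (hf.continuous.sub continuous_const).sub (by fun_prop)
  rw [gaussPdf.integral_mul_sub_eq s hε f (gradient f s)
    (gaussPdf.integrable_mul_of_abs_le_pow s hε hRc hR)]
  calc _ ≤ L / 2 * (n * ε) := gaussPdf.abs_integral_mul_le_of_abs_le_sq s hε hR
    _ = n * L / 2 * ε := by ring

/-- **Quantitative Gaussian smoothing bound.**  If `f : ℝⁿ → ℝ` is differentiable
with `L`-Lipschitz gradient, then for every `s` and every `ε > 0`,
`|∫ f(x) φ_ε(x; s) dx − f(s)| ≤ (n L / 2) ε`. -/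
theorem gaussian_smoothing_error_bound (n : ℕ) (L : ℝ) (hL : 0 ≤ L)
    (f : EuclideanSpace ℝ (Fin n) → ℝ)
    (hf : Differentiable ℝ f)
    (hlip : ∀ x y, ‖gradient f x - gradient f y‖ ≤ L * ‖x - y‖)
    (s : EuclideanSpace ℝ (Fin n)) (ε : ℝ) (hε : 0 < ε) :
    |(∫ x, f x * gaussPdf n ε s x) - f s| ≤ ((n : ℝ) * L / 2) * ε :=
  gaussian_smoothing_error_bound_general n L f hf hlip s ε hε
end

section
/- Fix integers N ≥ 1 and T ≥ 1, initial scores a : Fin N → ℝ and transition scores b_t : Fin N × Fin N → ℝ for t = 2,…,T, and define φ_1(i) = a(i) and φ_t(i) = max_{j ∈ Fin N} ( b_t(j, i) + φ_{t−1}(j) ) for 2 ≤ t ≤ T. Suppose ψ_t : Fin N → Fin N satisfies ψ_t(i) ∈ argmax_{j ∈ Fin N} ( b_t(j, i) + φ_{t−1}(j) ) for each 2 ≤ t ≤ T and i, let i_T ∈ argmax_{i ∈ Fin N} φ_T(i), and define the backtracked indices i_{t} = ψ_{t+1}(i_{t+1}) for t = T−1, …, 1. Then the backtracked path (i_1, …,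 i_T) attains the global maximum of the path score: a(i_1) + Σ_{t=2}^T b_t(i_{t−1}, i_t) = max over all (j_1,…,j_T) ∈ (Fin N)^T of a(j_1) + Σ_{t=2}^T b_t(j_{t−1}, j_t). -/
/-- The Viterbi value function, defined by the forward recursion
`φ_1(i) = a(i)` and `φ_t(i) = max_j (b_t(j, i) + φ_{t-1}(j))` for `t ≥ 2`
(the maximum over the nonempty finite type `Fin N` is expressed as `⨆ j`). -/
noncomputable def viterbiValue (N : ℕ) (a : Fin N → ℝ) (b : ℕ → Fin N → Fin N → ℝ) :
    ℕ → Fin N → ℝ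
  | 0 => a
  | 1 => a
  | t + 2 => fun i => ⨆ j : Fin N, (b (t + 2) j i + viterbiValue N a b (t + 1) j)

/-!
Every path score is bounded by the value function at its endpoint,
`a(j_1) + Σ_{t ≤ n} b_t(j_{t-1}, j_t) ≤ φ_n(j_n)`, because `φ_n` maximises over all predecessors
at every step. Along the backtracked path each step realises that maximum, so the inequality is
an equality there, and choosing `i_T` to maximise `φ_T` finishes the proof.
-/

open Finset

section

variable {N : ℕ} (a : Fin N → ℝ) (b : ℕ → Fin N → Fin N → ℝ)

def pathScore (j : ℕ → Fin N) (T : ℕ) : ℝ :=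
  a (j 1) + ∑ t ∈ Icc 2 T, b t (j (t - 1)) (j t)

theorem pathScore_one (j : ℕ → Fin N) : pathScore a b j 1 = a (j 1) := by
  simp [pathScore]

theorem pathScore_succ (j : ℕ → Fin N) {n : ℕ} (hn : 1 ≤ n) :
    pathScore a b j (n + 1) = pathScore a b j n + b (n + 1) (j n) (j (n + 1)) := by
  rw [pathScore, pathScore, sum_Icc_succ_top (by omega), Nat.add_sub_cancel, add_assoc]

theorem viterbiValue_one : viterbiValue N a b 1 = a := rfl

theorem viterbiValue_succ {n : ℕ} (hn : 1 ≤ n) (i : Fin N) :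
    viterbiValue N a b (n + 1) i = ⨆ j, (b (n + 1) j i + viterbiValue N a b n j) := by
  obtain ⟨s, rfl⟩ := Nat.exists_eq_add_of_le' hn
  rfl

theorem add_viterbiValue_le {n : ℕ} (hn : 1 ≤ n) (i j : Fin N) :
    b (n + 1) j i + viterbiValue N a b n j ≤ viterbiValue N a b (n + 1) i := by
  rw [viterbiValue_succ a b hn]
  exact Finite.le_ciSup (fun j ↦ b (n + 1) j i + viterbiValue N a b n j) j

theorem viterbiValue_succ_eq_of_forall_le {n : ℕ} (hn : 1 ≤ n) {i k : Fin N}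
    (hk : ∀ j, b (n + 1) j i + viterbiValue N a b n j ≤ b (n + 1) k i + viterbiValue N a b n k) :
    viterbiValue N a b (n + 1) i = b (n + 1) k i + viterbiValue N a b n k := by
  have : Nonempty (Fin N) := ⟨k⟩
  refine le_antisymm ?_ (add_viterbiValue_le a b hn i k)
  rw [viterbiValue_succ a b hn]
  exact ciSup_le hk

theorem pathScore_le_viterbiValue (j : ℕ → Fin N) {T : ℕ} (hT : 1 ≤ T) :
    pathScore a b j T ≤ viterbiValue N a b T (j T) := by
  induction T, hT using Nat.le_induction with
  | base => rw [pathScore_one, viterbiValue_one]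
  | succ n hn ih =>
    rw [pathScore_succ a b j hn]
    linarith [add_viterbiValue_le a b hn (j (n + 1)) (j n)]

theorem pathScore_eq_viterbiValue_of_backtrack {T : ℕ} (ψ : ℕ → Fin N → Fin N)
    (hψ : ∀ t, 2 ≤ t → t ≤ T → ∀ i j,
      b t j i + viterbiValue N a b (t - 1) j ≤
        b t (ψ t i) i + viterbiValue N a b (t - 1) (ψ t i))
    (p : ℕ → Fin N) (hback : ∀ t, 1 ≤ t → t < T → p t = ψ (t + 1) (p (t + 1)))
    {n : ℕ} (hn : 1 ≤ n) (hnT : n ≤ T) :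
    pathScore a b p n = viterbiValue N a b n (p n) := by
  induction n, hn using Nat.le_induction with
  | base => rw [pathScore_one, viterbiValue_one]
  | succ n hn ih =>
    have hstep : viterbiValue N a b (n + 1) (p (n + 1)) =
        b (n + 1) (p n) (p (n + 1)) + viterbiValue N a b n (p n) := by
      rw [hback n hn (by omega)]
      apply viterbiValue_succ_eq_of_forall_le a b hn
      simpa using hψ (n + 1) (by omega) hnT (p (n + 1))
    rw [pathScore_succ a b p hn, ih (by omega), hstep, add_comm]

end

theorem viterbi_backtracking_correct_general (N T : ℕ) (hT : 1 ≤ T)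
    (a : Fin N → ℝ) (b : ℕ → Fin N → Fin N → ℝ)
    (ψ : ℕ → Fin N → Fin N)
    (hψ : ∀ t, 2 ≤ t → t ≤ T → ∀ i j,
      b t j i + viterbiValue N a b (t - 1) j ≤
        b t (ψ t i) i + viterbiValue N a b (t - 1) (ψ t i))
    (iT : Fin N) (hiT : ∀ i, viterbiValue N a b T i ≤ viterbiValue N a b T iT)
    (p : ℕ → Fin N) (hpT : p T = iT)
    (hback : ∀ t, 1 ≤ t → t < T → p t = ψ (t + 1) (p (t + 1))) :
    IsGreatest
      {x : ℝ | ∃ j : ℕ → Fin N, x = a (j 1) + ∑ t ∈ Finset.Icc 2 T, b t (j (t - 1)) (j t)}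
      (a (p 1) + ∑ t ∈ Finset.Icc 2 T, b t (p (t - 1)) (p t)) := by
  refine ⟨⟨p, rfl⟩, ?_⟩
  rintro _ ⟨j, rfl⟩
  calc pathScore a b j T
      ≤ viterbiValue N a b T (j T) := pathScore_le_viterbiValue a b j hT
    _ ≤ viterbiValue N a b T iT := hiT (j T)
    _ = pathScore a b p T := by
      rw [← hpT, pathScore_eq_viterbiValue_of_backtrack a b ψ hψ p hback hT le_rfl]

/-- **Correctness of Viterbi backtracking.**  Suppose `ψ_t(i)` is an argmax of
`j ↦ b_t(j, i) + φ_{t-1}(j)` for each `2 ≤ t ≤ T` and `i`, `i_T` is an argmax of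
`φ_T`, and `p` is the backtracked path, i.e. `p T = i_T` and
`p t = ψ_{t+1}(p (t+1))` for `1 ≤ t < T`.  Then the path `(p 1, …, p T)` attains
the global maximum of the path score
`a(i_1) + Σ_{t=2}^T b_t(i_{t-1}, i_t)` over all paths `(i_1, …, i_T)`. -/
theorem viterbi_backtracking_correct (N T : ℕ) (hN : 1 ≤ N) (hT : 1 ≤ T)
    (a : Fin N → ℝ) (b : ℕ → Fin N → Fin N → ℝ)
    (ψ : ℕ → Fin N → Fin N)
    (hψ : ∀ t, 2 ≤ t → t ≤ T → ∀ i j,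
      b t j i + viterbiValue N a b (t - 1) j ≤
        b t (ψ t i) i + viterbiValue N a b (t - 1) (ψ t i))
    (iT : Fin N) (hiT : ∀ i, viterbiValue N a b T i ≤ viterbiValue N a b T iT)
    (p : ℕ → Fin N) (hpT : p T = iT)
    (hback : ∀ t, 1 ≤ t → t < T → p t = ψ (t + 1) (p (t + 1))) :
    IsGreatest
      {x : ℝ | ∃ j : ℕ → Fin N, x = a (j 1) + ∑ t ∈ Finset.Icc 2 T, b t (j (t - 1)) (j t)}
      (a (p 1) + ∑ t ∈ Finset.Icc 2 T, b t (p (t - 1)) (p t)) :=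
  viterbi_backtracking_correct_general N T hT a b ψ hψ iT hiT p hpT hback
end
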